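/- arXiv:1610.03727 — 3 statements merged into one kernel-verified Lean document; each statement's English description precedes it below -/
import Mathlib

section
/- Under the same setting as the Key Lemma, if i, j ∈ Q with a_i > a_j and 0 < y*_j, then y*_i > 0. In other words, at the optimum, a coordinate with a strictly larger value a_q is positive whenever any coordinate with smaller a-value is positive. -/
/-- at the optimum, if a_i > a_j and y*_j > 0 then y*_i > 0. -/
theorem stmt_4 {Q : Type*} [Fintype Q] (U : ℝ → ℝ) (hU : ContDiff ℝ 1 U)
    (hUconc : ConcaveOn ℝ Set.univ U) (hUmono : Monotone U)
    (ρ : ℝ) (hρ : 0 < ρ) (N a : Q → ℝ) (hN : ∀ q, 0 < N q)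
    (g : (Q → ℝ) → ℝ)
    (hg : ∀ y, g y = U (∑ q, y q) - ∑ q, (ρ / 2 * (y q) ^ 2 - a q * y q))
    (B : Set (Q → ℝ)) (hB : B = {y | ∀ q, y q ∈ Set.Icc 0 (N q)})
    (ystar : Q → ℝ) (hyB : ystar ∈ B) (hymax : IsMaxOn g B ystar)
    (i j : Q) (hij : a i > a j) (hj : 0 < ystar j) :
    0 < ystar i := by
  classical
  by_contra hi0
  push_neg at hi0
  rw [hB] at hyB
  have hyi : ystar i = 0 := le_antisymm hi0 (hyB i).1
  have hne : i ≠ j := by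
    intro h; rw [h] at hij; exact lt_irrefl _ hij
  set ε : ℝ := min (min (N i) (ystar j)) ((a i - a j) / ρ) with hεdef
  have hε : 0 < ε := by
    exact lt_min (lt_min (hN i) hj) (div_pos (sub_pos.mpr hij) hρ)
  have hεN : ε ≤ N i := le_trans (min_le_left _ _) (min_le_left _ _)
  have hεy : ε ≤ ystar j := le_trans (min_le_left _ _) (min_le_right _ _)
  have hερ : ρ * ε ≤ a i - a j := by
    have := min_le_right (min (N i) (ystar j)) ((a i - a j) / ρ)
    calc ρ * ε ≤ ρ * ((a i - a j) / ρ) := by nlinarith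
      _ = a i - a j := by field_simp
  set y' : Q → ℝ := fun q => if q = i then ε else if q = j then ystar j - ε else ystar q
    with hy'def
  have hy'B : y' ∈ B := by
    rw [hB]
    intro q
    by_cases hq : q = i
    · subst hq; simp [hy'def, hε.le, hεN]
    · by_cases hq' : q = j
      · subst hq'
        have h2 := (hyB q).2
        simp only [hy'def, Set.mem_Icc]
        simp only [if_neg hq, if_true]
        exact ⟨by linarith, by linarith⟩
      · simpa [hy'def, hq, hq'] using hyB q
  have hpt : ∀ q, y' q = ystar q + ((if q = i then ε else 0) + (if q = j then -ε else 0)) := by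
    intro q
    by_cases hq : q = i
    · subst hq; simp [hy'def, if_neg hne, hyi]
    · by_cases hq' : q = j
      · subst hq'; simp only [hy'def]; simp only [if_neg hq, if_true]; ring
      · simp [hy'def, hq, hq']
  have hsum : ∑ q, y' q = ∑ q, ystar q := by
    simp only [hpt]
    rw [Finset.sum_add_distrib, Finset.sum_add_distrib,
      Finset.sum_ite_eq' Finset.univ i (fun _ => ε),
      Finset.sum_ite_eq' Finset.univ j (fun _ => -ε)]
    simp
  have hpt2 : ∀ q, ρ / 2 * (y' q) ^ 2 - a q * y' q
      = (ρ / 2 * (ystar q) ^ 2 - a q * ystar q)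
        + ((if q = i then (ρ / 2 * ε ^ 2 - a i * ε) else 0)
          + (if q = j then ((ρ / 2 * (ystar j - ε) ^ 2 - a j * (ystar j - ε))
              - (ρ / 2 * (ystar j) ^ 2 - a j * ystar j)) else 0)) := by
    intro q
    by_cases hq : q = i
    · subst hq; simp [hy'def, if_neg hne, hyi]
    · by_cases hq' : q = j
      · subst hq'; simp only [hy'def]; simp only [if_neg hq, if_true]; ring
      · simp [hy'def, hq, hq']
  have hsum2 : ∑ q, (ρ / 2 * (y' q) ^ 2 - a q * y' q)
      = ∑ q, (ρ / 2 * (ystar q) ^ 2 - a q * ystar q)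
        + ((ρ / 2 * ε ^ 2 - a i * ε)
          + ((ρ / 2 * (ystar j - ε) ^ 2 - a j * (ystar j - ε))
              - (ρ / 2 * (ystar j) ^ 2 - a j * ystar j))) := by
    simp only [hpt2]
    rw [Finset.sum_add_distrib, Finset.sum_add_distrib,
      Finset.sum_ite_eq' Finset.univ i, Finset.sum_ite_eq' Finset.univ j]
    simp
  have hgt : g ystar < g y' := by
    rw [hg, hg, hsum, hsum2]
    have : (ρ / 2 * ε ^ 2 - a i * ε)
        + ((ρ / 2 * (ystar j - ε) ^ 2 - a j * (ystar j - ε))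
            - (ρ / 2 * (ystar j) ^ 2 - a j * ystar j)) < 0 := by
      nlinarith [mul_pos hρ (mul_pos hε hj)]
    linarith
  exact absurd (hymax hy'B) (not_le.mpr hgt)
end

section
/- Under the same setting as the Key Lemma, if i, j ∈ Q with a_i ≥ a_j, then y*_i ≥ min(y*_j, N_i). In particular, if additionally N_i ≥ y*_j, then y*_i ≥ y*_j. -/
/-- at the optimum, a_i ≥ a_j implies y*_i ≥ min(y*_j, N_i);
in particular if N_i ≥ y*_j then y*_i ≥ y*_j. -/
theorem stmt_5 {Q : Type*} [Fintype Q] (U : ℝ → ℝ) (hU : ContDiff ℝ 1 U)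
    (hUconc : ConcaveOn ℝ Set.univ U) (hUmono : Monotone U)
    (ρ : ℝ) (hρ : 0 < ρ) (N a : Q → ℝ) (hN : ∀ q, 0 < N q)
    (g : (Q → ℝ) → ℝ)
    (hg : ∀ y, g y = U (∑ q, y q) - ∑ q, (ρ / 2 * (y q) ^ 2 - a q * y q))
    (B : Set (Q → ℝ)) (hB : B = {y | ∀ q, y q ∈ Set.Icc 0 (N q)})
    (ystar : Q → ℝ) (hyB : ystar ∈ B) (hymax : IsMaxOn g B ystar)
    (i j : Q) (hij : a i ≥ a j) :
    ystar i ≥ min (ystar j) (N i) ∧ (N i ≥ ystar j → ystar i ≥ ystar j) := by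
  subst hB
  classical
  have main : ystar i ≥ min (ystar j) (N i) := by
    by_contra hlt
    push_neg at hlt
    have hji : ystar i < ystar j := lt_of_lt_of_le hlt (min_le_left _ _)
    have hNi : ystar i < N i := lt_of_lt_of_le hlt (min_le_right _ _)
    have hne : i ≠ j := by rintro rfl; exact lt_irrefl _ hji
    set ε := min ((ystar j - ystar i) / 2) (N i - ystar i) with hεdef
    have hε : 0 < ε := lt_min (by linarith) (by linarith)
    have hε1 : ε ≤ (ystar j - ystar i) / 2 := min_le_left _ _
    have hε2 : ε ≤ N i - ystar i := min_le_right _ _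
    set y' := Function.update (Function.update ystar i (ystar i + ε)) j (ystar j - ε) with hy'
    have hy'i : y' i = ystar i + ε := by
      rw [hy', Function.update_of_ne hne, Function.update_self]
    have hy'j : y' j = ystar j - ε := by rw [hy', Function.update_self]
    have hy'q : ∀ q, q ≠ i → q ≠ j → y' q = ystar q := by
      intro q hqi hqj
      rw [hy', Function.update_of_ne hqj, Function.update_of_ne hqi]
    have h0i := (hyB i).1
    have h0j := (hyB j).1
    have hNj := (hyB j).2
    have hy'B : y' ∈ {y : Q → ℝ | ∀ q, y q ∈ Set.Icc 0 (N q)} := by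
      intro q
      rcases eq_or_ne q i with rfl | hqi
      · rw [hy'i]; constructor <;> [linarith; linarith]
      rcases eq_or_ne q j with rfl | hqj
      · rw [hy'j]; constructor <;> [linarith; linarith]
      · rw [hy'q q hqi hqj]; exact hyB q
    -- sum equality
    have hpair : ∀ f : Q → ℝ, (∀ q, q ≠ i → q ≠ j → f q = 0) →
        ∑ q, f q = f i + f j := by
      intro f hf
      rw [← Finset.sum_subset (Finset.subset_univ ({i, j} : Finset Q))
        (by intro x _ hx; simp only [Finset.mem_insert, Finset.mem_singleton, not_or] at hx
            exact hf x hx.1 hx.2),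
        Finset.sum_pair hne]
    have hsum : ∑ q, y' q = ∑ q, ystar q := by
      have := hpair (fun q => y' q - ystar q) (by
        intro q hqi hqj; simp [hy'q q hqi hqj])
      have h2 : ∑ q, (y' q - ystar q) = 0 := by
        rw [this]; rw [hy'i, hy'j]; ring
      rw [Finset.sum_sub_distrib] at h2
      linarith
    have hF : ∑ q, (ρ / 2 * (y' q) ^ 2 - a q * y' q)
        - ∑ q, (ρ / 2 * (ystar q) ^ 2 - a q * ystar q)
        = ρ * ε * (ystar i - ystar j + ε) - (a i - a j) * ε := by
      have := hpair (fun q => (ρ / 2 * (y' q) ^ 2 - a q * y' q)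
          - (ρ / 2 * (ystar q) ^ 2 - a q * ystar q)) (by
        intro q hqi hqj; simp [hy'q q hqi hqj])
      rw [← Finset.sum_sub_distrib, this]; rw [hy'i, hy'j]; ring
    have hgt : g ystar < g y' := by
      rw [hg, hg, hsum]
      have : ρ * ε * (ystar i - ystar j + ε) - (a i - a j) * ε < 0 := by
        have h1 : ystar i - ystar j + ε < 0 := by linarith
        nlinarith [mul_pos hρ hε]
      linarith [hF]
    exact absurd (hymax hy'B) (not_le.mpr hgt)
  exact ⟨main, fun h => by rw [min_eq_left h] at main; exact main⟩
end

section
/- (Water-filling characterization.) Let y* maximize g(y) = U(Σ_q y_q) - Σ_q (ρ/2 y_q² - a_q y_q) over {0 ≤ y_q ≤ N_q}, with U continuously differentiable, concave, increasing, ρ > 0, and let a_max = max_q a_q. Then there exists a level L ≥ 0 such that for every q ∈ Q, y*_q = min(N_q, max(0, L - (a_max - a_q)/ρ)). That is, the optimal solution fills each 'bucket' q placed at height (a_max - a_q)/ρ with capacity N_q up to a common water level L. -/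
/-!
Fix every coordinate of the maximizer `y*` but one. The partial map `t ↦ g(y*[q ↦ t])` is maximized
on `[0, N_q]` at `y*_q`, and its derivative there is `U'(S) + a_q - ρ y*_q = ρ (m_q - y*_q)` with
`S = Σ y*` and `m_q = (U'(S) + a_q)/ρ`. The one-dimensional first-order condition
`(m_q - y*_q)(y - y*_q) ≤ 0` on `[0, N_q]` says that `y*_q` is the projection of `m_q` onto
`[0, N_q]`. Since `m_q = (U'(S) + a_max)/ρ - (a_max - a_q)/ρ`, the level `L = max 0 ((U'(S) + a_max)/ρ)`
works for all buckets at once.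
-/

open Set Function

theorem IsMaxOn.hasDerivAt_mul_sub_nonpos {φ : ℝ → ℝ} {s : Set ℝ} {t D y : ℝ}
    (hs : Convex ℝ s) (ht : t ∈ s) (hmax : IsMaxOn φ s t) (hφ : HasDerivAt φ D t)
    (hy : y ∈ s) : D * (y - t) ≤ 0 := by
  simpa [mul_comm] using
    hmax.localize.hasFDerivWithinAt_nonpos hφ.hasDerivWithinAt.hasFDerivWithinAt
      (sub_mem_posTangentConeAt_of_segment_subset (hs.segment_subset ht hy))

theorem eq_min_max_of_forall_mul_sub_nonpos {N m t : ℝ} (ht : t ∈ Icc 0 N)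
    (h : ∀ y ∈ Icc 0 N, (m - t) * (y - t) ≤ 0) : t = min N (max 0 m) := by
  obtain ⟨ht0, htN⟩ := ht
  rcases le_total m 0 with hm0 | hm0
  · rw [max_eq_left hm0, min_eq_right (ht0.trans htN)]
    nlinarith [h 0 ⟨le_rfl, ht0.trans htN⟩]
  rcases le_total N m with hmN | hmN
  · rw [max_eq_right hm0, min_eq_left hmN]
    nlinarith [h N ⟨ht0.trans htN, le_rfl⟩]
  · rw [max_eq_right hm0, min_eq_right hmN]
    nlinarith [h m ⟨hm0, hmN⟩]

theorem eq_min_max_of_isMaxOn_of_hasDerivAt {φ : ℝ → ℝ} {N m t ρ : ℝ} (hρ : 0 < ρ)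
    (ht : t ∈ Icc 0 N) (hmax : IsMaxOn φ (Icc 0 N) t) (hφ : HasDerivAt φ (ρ * (m - t)) t) :
    t = min N (max 0 m) :=
  eq_min_max_of_forall_mul_sub_nonpos ht fun _ hy =>
    nonpos_of_mul_nonpos_right
      (mul_assoc ρ _ _ ▸ hmax.hasDerivAt_mul_sub_nonpos (convex_Icc 0 N) ht hφ hy) hρ

theorem IsMaxOn.comp_update_of_pi {ι : Type*} [DecidableEq ι] {α : ι → Type*} {β : Type*}
    [Preorder β] {f : (∀ i, α i) → β} {s : ∀ i, Set (α i)} {x : ∀ i, α i}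
    (hmax : IsMaxOn f (univ.pi s) x) (hx : x ∈ univ.pi s) (i : ι) :
    IsMaxOn (fun t => f (update x i t)) (s i) (x i) := fun _ ht => by
  simpa using hmax (update_mem_pi_iff_of_mem hx |>.2 fun _ => ht)

theorem hasDerivAt_sum_apply_update {ι : Type*} [Fintype ι] [DecidableEq ι] {f : ι → ℝ → ℝ}
    {y : ι → ℝ} {i : ι} {t D : ℝ} (hf : HasDerivAt (f i) D t) :
    HasDerivAt (fun s => ∑ j, f j (update y i s j)) D t := by
  have : ∀ s, ∑ j, f j (update y i s j) = f i s + ∑ j ∈ Finset.univ \ {i}, f j (y j) := by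
    intro s
    simp_rw [apply_update (fun j => f j), Finset.sum_update_of_mem (Finset.mem_univ i)]
  simp_rw [this]
  exact hf.add_const _

theorem max_zero_max_zero_sub {x δ : ℝ} (hδ : 0 ≤ δ) : max 0 (max 0 x - δ) = max 0 (x - δ) := by
  rw [← max_sub_sub_right, zero_sub, ← max_assoc, max_eq_left (neg_nonpos.2 hδ)]

theorem stmt_6_general {Q : Type*} [Fintype Q] (U : ℝ → ℝ)
    (hU : ContDiff ℝ 1 U)
    (ρ : ℝ) (hρ : 0 < ρ) (N a : Q → ℝ)
    (amax : ℝ) (hamax : IsGreatest (Set.range a) amax)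
    (g : (Q → ℝ) → ℝ)
    (hg : ∀ y, g y = U (∑ q, y q) - ∑ q, (ρ / 2 * (y q) ^ 2 - a q * y q))
    (B : Set (Q → ℝ)) (hB : B = {y | ∀ q, y q ∈ Set.Icc 0 (N q)})
    (ystar : Q → ℝ) (hyB : ystar ∈ B) (hymax : IsMaxOn g B ystar) :
    ∃ L, 0 ≤ L ∧ ∀ q, ystar q = min (N q) (max 0 (L - (amax - a q) / ρ)) := by
  classical
  obtain rfl : B = univ.pi fun q => Icc 0 (N q) := by
    rw [hB]; ext; simp only [mem_ofPred_eq, mem_pi, mem_univ, true_imp_iff]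
  obtain rfl : g = _ := funext hg
  set c := deriv U (∑ q, ystar q)
  have hc : HasDerivAt U c (∑ q, ystar q) := (hU.differentiable one_ne_zero _).hasDerivAt
  have hproj (q : Q) : ystar q = min (N q) (max 0 ((c + a q) / ρ)) := by
    refine eq_min_max_of_isMaxOn_of_hasDerivAt hρ (hyB q trivial)
      (hymax.comp_update_of_pi hyB q) ?_
    have hsum := hasDerivAt_sum_apply_update (f := fun _ s => s) (y := ystar) (i := q)
      (hasDerivAt_id (ystar q))
    have hquad := hasDerivAt_sum_apply_update (f := fun p s => ρ / 2 * s ^ 2 - a p * s)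
      (y := ystar) (i := q) (((hasDerivAt_pow 2 _).const_mul (ρ / 2)).sub
        ((hasDerivAt_id (ystar q)).const_mul (a q)))
    have hc' : HasDerivAt U c (∑ j, update ystar q (ystar q) j) := by rwa [update_eq_self]
    refine ((hc'.comp (ystar q) hsum).sub hquad).congr_deriv ?_
    rw [mul_sub, mul_div_cancel₀ _ hρ.ne']
    push_cast
    ring
  refine ⟨max 0 ((c + amax) / ρ), le_max_left _ _, fun q => ?_⟩
  have hδ : 0 ≤ (amax - a q) / ρ := div_nonneg (sub_nonneg.2 (hamax.2 ⟨q, rfl⟩)) hρ.le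
  rw [hproj q, max_zero_max_zero_sub hδ]
  congr 2
  field_simp
  ring

/-- Water-filling characterization: the optimal y* has the form
y*_q = min(N_q, max(0, L - (a_max - a_q)/ρ)) for a common level L ≥ 0. -/
theorem stmt_6 {Q : Type*} [Fintype Q] [Nonempty Q] (U : ℝ → ℝ)
    (hU : ContDiff ℝ 1 U) (hUconc : ConcaveOn ℝ Set.univ U) (hUmono : Monotone U)
    (ρ : ℝ) (hρ : 0 < ρ) (N a : Q → ℝ) (hN : ∀ q, 0 < N q)
    (amax : ℝ) (hamax : IsGreatest (Set.range a) amax)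
    (g : (Q → ℝ) → ℝ)
    (hg : ∀ y, g y = U (∑ q, y q) - ∑ q, (ρ / 2 * (y q) ^ 2 - a q * y q))
    (B : Set (Q → ℝ)) (hB : B = {y | ∀ q, y q ∈ Set.Icc 0 (N q)})
    (ystar : Q → ℝ) (hyB : ystar ∈ B) (hymax : IsMaxOn g B ystar) :
    ∃ L, 0 ≤ L ∧ ∀ q, ystar q = min (N q) (max 0 (L - (amax - a q) / ρ)) :=
  stmt_6_general U hU ρ hρ N a amax hamax g hg B hB ystar hyB hymax
end
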